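/- Assume the coordinate quasi-Codazzi setup on U and that the bilinear form h x is nondegenerate for every x ∈ U. Let Γ⁰ be the unique smooth Christoffel map determined by h x (Γ⁰ x v w) u = (1/2)( fderiv ℝ (fun y ↦ h y w u) x v + fderiv ℝ (fun y ↦ h y v u) x w − fderiv ℝ (fun y ↦ h y v w) x u ) (the Levi-Civita connection of h), and set (∇⁰_X Y)(x) := fderiv ℝ Y x (X x) + Γ⁰ x (X x) (Y x). Then the Kossowski pseudo-connection satisfies Γ(X,Y,Z)(x) = h x ((∇⁰_X Y)(x)) (Z x) for all smooth vector fields X, Y, Z : U → ℝⁿ and all x ∈ U. (Paper's Lemma 3.15, in a trivialization.) -/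
import Mathlib


noncomputable section

open Set

/-- ℝⁿ. -/
abbrev Vn (n : ℕ) : Type := Fin n → ℝ

/-- Pairings (fiber metrics pairing `E⁺` with `E⁻`) on the trivialized bundle. -/
abbrev Pairn (n : ℕ) : Type := Vn n →L[ℝ] Vn n →L[ℝ] ℝ

/-- Connection forms on the trivialized bundle. -/
abbrev Connn (n : ℕ) : Type := Vn n →L[ℝ] Vn n →L[ℝ] Vn n

/-- Bundle maps `TU → E±` in the trivialization. -/
abbrev Bdln (n : ℕ) : Type := Vn n →L[ℝ] Vn n

/-- Covariant derivative of the section `ν` along the vector field `X`,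
for the connection with connection form `A`. -/
def cov {n : ℕ} (A : Vn n → Connn n) (X ν : Vn n → Vn n) (x : Vn n) : Vn n :=
  fderiv ℝ ν x (X x) + A x (X x) (ν x)

/-- Lie bracket of vector fields on an open set of ℝⁿ. -/
def lieB {n : ℕ} (X Y : Vn n → Vn n) (x : Vn n) : Vn n :=
  fderiv ℝ Y x (X x) - fderiv ℝ X x (Y x)

/-- The section `Φ±Y : x ↦ Φ± x (Y x)`. -/
def secPhi {n : ℕ} (Φ : Vn n → Bdln n) (Y : Vn n → Vn n) : Vn n → Vn n :=
  fun x => Φ x (Y x)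

/-- The induced (possibly degenerate) metric `h x y z = 2 p x (Φ⁺ x y) (Φ⁻ x z)`. -/
def hmet {n : ℕ} (p : Vn n → Pairn n) (Φp Φm : Vn n → Bdln n) (x y z : Vn n) : ℝ :=
  2 * p x (Φp x y) (Φm x z)

/-- The generalized Amari–Chentsov cubic tensor. -/
def Ctensor {n : ℕ} (p : Vn n → Pairn n) (Ap Am : Vn n → Connn n)
    (Φp Φm : Vn n → Bdln n) (X Y Z : Vn n → Vn n) (x : Vn n) : ℝ :=
  -2 * (p x (cov Ap X (secPhi Φp Y) x) (Φm x (Z x))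
        - p x (Φp x (Z x)) (cov Am X (secPhi Φm Y) x))

/-- The relative torsion `T(X,Y) = ∇_X(ΦY) − ∇_Y(ΦX) − Φ[X,Y]`. -/
def Ttor {n : ℕ} (A : Vn n → Connn n) (Φ : Vn n → Bdln n)
    (X Y : Vn n → Vn n) (x : Vn n) : Vn n :=
  cov A X (secPhi Φ Y) x - cov A Y (secPhi Φ X) x - Φ x (lieB X Y x)

/-- The Kossowski pseudo-connection. -/
def Koss {n : ℕ} (p : Vn n → Pairn n) (Φp Φm : Vn n → Bdln n)
    (X Y Z : Vn n → Vn n) (x : Vn n) : ℝ :=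
  fderiv ℝ (fun y => p y (Φp y (Y y)) (Φm y (Z y))) x (X x)
  + fderiv ℝ (fun y => p y (Φp y (Z y)) (Φm y (X y))) x (Y x)
  - fderiv ℝ (fun y => p y (Φp y (X y)) (Φm y (Y y))) x (Z x)
  - p x (Φp x (X x)) (Φm x (lieB Y Z x))
  + p x (Φp x (Y x)) (Φm x (lieB Z X x))
  + p x (Φp x (Z x)) (Φm x (lieB X Y x))

/-- The curvature of a connection form `A` at `x` in directions `v`, `w`. -/
def curvA {n : ℕ} (A : Vn n → Connn n) (x v w : Vn n) : Vn n →L[ℝ] Vn n :=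
  fderiv ℝ A x v w - fderiv ℝ A x w v + (A x v).comp (A x w) - (A x w).comp (A x v)

/-- Paper's Lemma 3.15 (in a trivialization): in the coordinate quasi-Codazzi setup,
if `h` is nondegenerate on `U` and `Γ⁰` is the (unique, smooth) Christoffel map of the
Levi-Civita connection of `h`, then the Kossowski pseudo-connection satisfies
`Γ(X,Y,Z)(x) = h x ((∇⁰_X Y)(x)) (Z x)`. -/
theorem statement10 {n : ℕ} (U : Set (Vn n)) (hUopen : IsOpen U)
    (p : Vn n → Pairn n) (hpsmooth : ContDiffOn ℝ (⊤ : ℕ∞) p U)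
    (Ap Am : Vn n → Connn n)
    (hApsmooth : ContDiffOn ℝ (⊤ : ℕ∞) Ap U) (hAmsmooth : ContDiffOn ℝ (⊤ : ℕ∞) Am U)
    (hdual : ∀ x ∈ U, ∀ v a b : Vn n,
      fderiv ℝ p x v a b = p x (Ap x v a) b + p x a (Am x v b))
    (Φp Φm : Vn n → Bdln n)
    (hΦpsmooth : ContDiffOn ℝ (⊤ : ℕ∞) Φp U) (hΦmsmooth : ContDiffOn ℝ (⊤ : ℕ∞) Φm U)
    (hLag : ∀ x ∈ U, ∀ y z : Vn n, p x (Φp x y) (Φm x z) = p x (Φp x z) (Φm x y))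
    -- h is nondegenerate at every point of U
    (hnondeg : ∀ x ∈ U, ∀ y : Vn n, (∀ z : Vn n, hmet p Φp Φm x y z = 0) → y = 0)
    -- Γ⁰ is the smooth Christoffel map determined by the Levi-Civita formula
    (Γ0 : Vn n → Connn n) (hΓ0smooth : ContDiffOn ℝ (⊤ : ℕ∞) Γ0 U)
    (hΓ0 : ∀ x ∈ U, ∀ v w u : Vn n,
      hmet p Φp Φm x (Γ0 x v w) u
        = ((1:ℝ)/2) * (fderiv ℝ (fun y => hmet p Φp Φm y w u) x v
            + fderiv ℝ (fun y => hmet p Φp Φm y v u) x w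
            - fderiv ℝ (fun y => hmet p Φp Φm y v w) x u)) :
    ∀ X Y Z : Vn n → Vn n,
      ContDiffOn ℝ (⊤ : ℕ∞) X U → ContDiffOn ℝ (⊤ : ℕ∞) Y U → ContDiffOn ℝ (⊤ : ℕ∞) Z U →
      ∀ x ∈ U,
        Koss p Φp Φm X Y Z x
          = hmet p Φp Φm x (fderiv ℝ Y x (X x) + Γ0 x (X x) (Y x)) (Z x) := by
  intro X Y Z hX hY hZ x hx
  have hxU : U ∈ nhds x := hUopen.mem_nhds hx
  have dp : HasFDerivAt p (fderiv ℝ p x) x :=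
    ((hpsmooth.contDiffAt hxU).differentiableAt (by norm_num)).hasFDerivAt
  have dΦp : HasFDerivAt Φp (fderiv ℝ Φp x) x :=
    ((hΦpsmooth.contDiffAt hxU).differentiableAt (by norm_num)).hasFDerivAt
  have dΦm : HasFDerivAt Φm (fderiv ℝ Φm x) x :=
    ((hΦmsmooth.contDiffAt hxU).differentiableAt (by norm_num)).hasFDerivAt
  have dX : HasFDerivAt X (fderiv ℝ X x) x :=
    ((hX.contDiffAt hxU).differentiableAt (by norm_num)).hasFDerivAt
  have dY : HasFDerivAt Y (fderiv ℝ Y x) x :=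
    ((hY.contDiffAt hxU).differentiableAt (by norm_num)).hasFDerivAt
  have dZ : HasFDerivAt Z (fderiv ℝ Z x) x :=
    ((hZ.contDiffAt hxU).differentiableAt (by norm_num)).hasFDerivAt
  -- the derivative of `y ↦ p y (Φp y (a y)) (Φm y (b y))`
  have key : ∀ (a b : Vn n → Vn n) (a' b' : Vn n →L[ℝ] Vn n),
      HasFDerivAt a a' x → HasFDerivAt b b' x → ∀ v,
      fderiv ℝ (fun y => p y (Φp y (a y)) (Φm y (b y))) x v
        = (fderiv ℝ p x v (Φp x (a x)) (Φm x (b x))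
            + p x (fderiv ℝ Φp x v (a x)) (Φm x (b x))
            + p x (Φp x (a x)) (fderiv ℝ Φm x v (b x)))
          + p x (Φp x (a' v)) (Φm x (b x)) + p x (Φp x (a x)) (Φm x (b' v)) := by
    intro a b a' b' ha hb v
    have h1 : HasFDerivAt (fun y => Φp y (a y))
        ((Φp x).comp a' + (fderiv ℝ Φp x).flip (a x)) x := dΦp.clm_apply ha
    have h2 : HasFDerivAt (fun y => Φm y (b y))
        ((Φm x).comp b' + (fderiv ℝ Φm x).flip (b x)) x := dΦm.clm_apply hb
    have h3 := (dp.clm_apply h1).clm_apply h2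
    rw [h3.fderiv]
    simp only [ContinuousLinearMap.add_apply, ContinuousLinearMap.coe_comp',
      Function.comp_apply, ContinuousLinearMap.flip_apply, map_add]
    ring
  have keyc : ∀ w u v, fderiv ℝ (fun y => p y (Φp y w) (Φm y u)) x v
      = fderiv ℝ p x v (Φp x w) (Φm x u) + p x (fderiv ℝ Φp x v w) (Φm x u)
        + p x (Φp x w) (fderiv ℝ Φm x v u) := by
    intro w u v
    have := key (fun _ => w) (fun _ => u) 0 0 (hasFDerivAt_const w x) (hasFDerivAt_const u x) v
    simpa using this
  have hdiff : ∀ w u : Vn n, DifferentiableAt ℝ (fun y => p y (Φp y w) (Φm y u)) x := by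
    intro w u
    exact ((dp.clm_apply (dΦp.clm_apply (hasFDerivAt_const w x))).clm_apply
      (dΦm.clm_apply (hasFDerivAt_const u x))).differentiableAt
  have keyh : ∀ w u v, fderiv ℝ (fun y => hmet p Φp Φm y w u) x v
      = 2 * (fderiv ℝ p x v (Φp x w) (Φm x u) + p x (fderiv ℝ Φp x v w) (Φm x u)
        + p x (Φp x w) (fderiv ℝ Φm x v u)) := by
    intro w u v
    have : fderiv ℝ (fun y => hmet p Φp Φm y w u) x
        = (2:ℝ) • fderiv ℝ (fun y => p y (Φp y w) (Φm y u)) x := by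
      simp only [hmet]
      exact fderiv_const_mul (hdiff w u) 2
    rw [this]
    simp only [ContinuousLinearMap.smul_apply, smul_eq_mul, keyc w u v]
  have Gsymm : ∀ v w u,
      fderiv ℝ p x v (Φp x w) (Φm x u) + p x (fderiv ℝ Φp x v w) (Φm x u)
        + p x (Φp x w) (fderiv ℝ Φm x v u)
      = fderiv ℝ p x v (Φp x u) (Φm x w) + p x (fderiv ℝ Φp x v u) (Φm x w)
        + p x (Φp x u) (fderiv ℝ Φm x v w) := by
    intro v w u
    have heq : (fun y => p y (Φp y w) (Φm y u)) =ᶠ[nhds x]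
        (fun y => p y (Φp y u) (Φm y w)) :=
      Filter.eventuallyEq_of_mem hxU (fun y hy => hLag y hy w u)
    have hfe := heq.fderiv_eq (𝕜 := ℝ)
    calc _ = fderiv ℝ (fun y => p y (Φp y w) (Φm y u)) x v := (keyc w u v).symm
      _ = fderiv ℝ (fun y => p y (Φp y u) (Φm y w)) x v := by rw [hfe]
      _ = _ := keyc u w v
  have e1 := key Y Z (fderiv ℝ Y x) (fderiv ℝ Z x) dY dZ (X x)
  have e2 := key Z X (fderiv ℝ Z x) (fderiv ℝ X x) dZ dX (Y x)
  have e3 := key X Y (fderiv ℝ X x) (fderiv ℝ Y x) dX dY (Z x)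
  have hG0 := hΓ0 x hx (X x) (Y x) (Z x)
  rw [keyh (Y x) (Z x) (X x), keyh (X x) (Z x) (Y x), keyh (X x) (Y x) (Z x)] at hG0
  simp only [hmet] at hG0 ⊢
  simp only [Koss, lieB, map_sub, map_add, ContinuousLinearMap.add_apply,
    ContinuousLinearMap.sub_apply]
  rw [e1, e2, e3]
  have s1 := hLag x hx (Z x) (fderiv ℝ Y x (X x))
  have s2 := hLag x hx (fderiv ℝ Z x (Y x)) (X x)
  have s3 := hLag x hx (fderiv ℝ X x (Z x)) (Y x)
  have s4 := Gsymm (Y x) (Z x) (X x)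
  linarith [hG0, s1, s2, s3, s4]
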